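/- arXiv:1505.07049 — 4 statements merged into one kernel-verified Lean document; each statement's English description precedes it below -/
import Mathlib

section
/- Let p be a prime with p ≡ 1 (mod 4) and let β be a positive integer. Then there exist positive integers x and y such that p^β = x² + y², x is odd, y is even, p does not divide x, and p does not divide y. -/
lemma aux_not_dvd (p a b : ℕ) (hp : p.Prime) (hab : a ^ 2 + b ^ 2 = p) : ¬ p ∣ a := by
  intro hdvd
  have ha2 : a ^ 2 ≤ p := by omega
  have hap : a < p := by
    by_contra h
    push_neg at h
    nlinarith [hp.two_le]
  have ha0 : a = 0 := Nat.eq_zero_of_dvd_of_lt hdvd hap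
  subst ha0
  simp at hab
  have hb2 : b ^ 2 = p := hab
  have hbd : b ∣ p := ⟨b, by nlinarith⟩
  rcases hp.eq_one_or_self_of_dvd b hbd with h | h
  · subst h; simp at hb2; have := hp.two_le; omega
  · subst h
    have := hp.two_le
    nlinarith

lemma aux_key (p : ℕ) (hp : p.Prime) (h1 : p % 4 = 1) :
    ∀ β : ℕ, 0 < β → ∃ x y : ℤ, (p : ℤ) ^ β = x ^ 2 + y ^ 2 ∧ ¬ (p : ℤ) ∣ x ∧ ¬ (p : ℤ) ∣ y := by
  have hpz : Prime (p : ℤ) := Nat.prime_iff_prime_int.mp hp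
  have : Fact p.Prime := ⟨hp⟩
  obtain ⟨a0, b0, hab0⟩ := Nat.Prime.sq_add_sq (p := p) (by omega)
  have hpa0 : ¬ p ∣ a0 := aux_not_dvd p a0 b0 hp hab0
  have hpb0 : ¬ p ∣ b0 := aux_not_dvd p b0 a0 hp (by omega)
  have hab : (p : ℤ) = (a0 : ℤ) ^ 2 + (b0 : ℤ) ^ 2 := by exact_mod_cast hab0.symm
  have hpa : ¬ (p : ℤ) ∣ (a0 : ℤ) := by exact_mod_cast hpa0
  have hpb : ¬ (p : ℤ) ∣ (b0 : ℤ) := by exact_mod_cast hpb0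
  have hp2 : ¬ (p : ℤ) ∣ 2 := by
    intro h
    have h2 : p ∣ 2 := by exact_mod_cast h
    have := Nat.le_of_dvd (by norm_num) h2
    have := hp.two_le
    omega
  intro β hβ
  induction β with
  | zero => omega
  | succ n ih =>
    rcases Nat.eq_zero_or_pos n with hn | hn
    · subst hn
      exact ⟨(a0 : ℤ), (b0 : ℤ), by simpa using hab, hpa, hpb⟩
    · obtain ⟨x, y, hxy, hpx, hpy⟩ := ih hn
      have hsnd : ∀ u v : ℤ, (p : ℤ) ^ (n + 1) = u ^ 2 + v ^ 2 → ¬ (p : ℤ) ∣ u → ¬ (p : ℤ) ∣ v := by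
        intro u v huv hu hv
        have hps : (p : ℤ) ∣ u ^ 2 + v ^ 2 := huv ▸ dvd_pow_self _ (by omega)
        have hv2 : (p : ℤ) ∣ v ^ 2 := hv.pow (by norm_num)
        have hu2 : (p : ℤ) ∣ u ^ 2 := by
          have := dvd_sub hps hv2
          simpa using this
        exact hu (hpz.dvd_of_dvd_pow hu2)
      by_cases hc : (p : ℤ) ∣ x * (a0 : ℤ) - y * (b0 : ℤ)
      · have heq : (p : ℤ) ^ (n + 1) = (x * (a0 : ℤ) + y * (b0 : ℤ)) ^ 2 + (x * (b0 : ℤ) - y * (a0 : ℤ)) ^ 2 := by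
          rw [pow_succ, hxy, hab]; ring
        have hu : ¬ (p : ℤ) ∣ x * (a0 : ℤ) + y * (b0 : ℤ) := by
          intro h
          have h2 : (p : ℤ) ∣ 2 * (x * (a0 : ℤ)) := by
            have hadd := dvd_add h hc
            have heq2 : x * (a0 : ℤ) + y * (b0 : ℤ) + (x * (a0 : ℤ) - y * (b0 : ℤ)) = 2 * (x * (a0 : ℤ)) := by ring
            rwa [heq2] at hadd
          rcases hpz.dvd_mul.mp h2 with h' | h'
          · exact hp2 h'
          · rcases hpz.dvd_mul.mp h' with h'' | h''
            · exact hpx h''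
            · exact hpa h''
        exact ⟨_, _, heq, hu, hsnd _ _ heq hu⟩
      · have heq : (p : ℤ) ^ (n + 1) = (x * (a0 : ℤ) - y * (b0 : ℤ)) ^ 2 + (x * (b0 : ℤ) + y * (a0 : ℤ)) ^ 2 := by
          rw [pow_succ, hxy, hab]; ring
        exact ⟨_, _, heq, hc, hsnd _ _ heq hc⟩

theorem stmt0 (p : ℕ) (hp : p.Prime) (h1 : p % 4 = 1) (β : ℕ) (hβ : 0 < β) :
    ∃ x y : ℕ, 0 < x ∧ 0 < y ∧ p ^ β = x ^ 2 + y ^ 2 ∧ Odd x ∧ Even y ∧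
      ¬ p ∣ x ∧ ¬ p ∣ y := by
  obtain ⟨u, v, huv, hpu, hpv⟩ := aux_key p hp h1 β hβ
  set x0 : ℕ := u.natAbs with hx0def
  set y0 : ℕ := v.natAbs with hy0def
  have hx0 : p ^ β = x0 ^ 2 + y0 ^ 2 := by
    have h : (p : ℤ) ^ β = (x0 : ℤ) ^ 2 + (y0 : ℤ) ^ 2 := by
      rw [huv, ← sq_abs u, ← sq_abs v, Int.abs_eq_natAbs, Int.abs_eq_natAbs]
    exact_mod_cast h
  have hpx0 : ¬ p ∣ x0 := fun h => hpu (Int.dvd_natAbs.mp (by exact_mod_cast h))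
  have hpy0 : ¬ p ∣ y0 := fun h => hpv (Int.dvd_natAbs.mp (by exact_mod_cast h))
  have hx0pos : 0 < x0 := Nat.pos_of_ne_zero fun h => hpx0 (h ▸ dvd_zero p)
  have hy0pos : 0 < y0 := Nat.pos_of_ne_zero fun h => hpy0 (h ▸ dvd_zero p)
  have hodd : Odd (x0 ^ 2 + y0 ^ 2) := by
    rw [← hx0]
    exact Odd.pow ⟨p / 2, by omega⟩
  rcases Nat.even_or_odd x0 with hx | hx
  · refine ⟨y0, x0, hy0pos, hx0pos, by omega, ?_, hx, hpy0, hpx0⟩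
    rcases Nat.even_or_odd y0 with hy | hy
    · exfalso
      rcases hx with ⟨k, hk⟩
      rcases hy with ⟨m, hm⟩
      rcases hodd with ⟨t, ht⟩
      have e1 : x0 ^ 2 = 2 * (2 * k * k) := by rw [hk]; ring
      have e2 : y0 ^ 2 = 2 * (2 * m * m) := by rw [hm]; ring
      omega
    · exact hy
  · refine ⟨x0, y0, hx0pos, hy0pos, hx0, hx, ?_, hpx0, hpy0⟩
    rcases Nat.even_or_odd y0 with hy | hy
    · exact hy
    · exfalso
      rcases hx with ⟨k, hk⟩
      rcases hy with ⟨m, hm⟩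
      rcases hodd with ⟨t, ht⟩
      have e1 : x0 ^ 2 = 2 * (2 * k * k + 2 * k) + 1 := by rw [hk]; ring
      have e2 : y0 ^ 2 = 2 * (2 * m * m + 2 * m) + 1 := by rw [hm]; ring
      omega
end

section
/- Let p be a prime with p ≡ 1 (mod 4), let β be a positive integer, and suppose x, y are positive integers with p^β = x² + y², p ∤ x, p ∤ y. If u is an integer with u² ≡ -1 (mod p^β), then p^β divides (u·y + x)(u·y − x), and p^β divides exactly one of u·y + x and u·y − x. -/
theorem stmt1 (p : ℕ) (hp : p.Prime) (h1 : p % 4 = 1) (β : ℕ) (hβ : 0 < β)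
    (x y : ℤ) (hx : 0 < x) (hy : 0 < y) (hs : (p : ℤ) ^ β = x ^ 2 + y ^ 2)
    (hpx : ¬ (p : ℤ) ∣ x) (hpy : ¬ (p : ℤ) ∣ y)
    (u : ℤ) (hu : (p : ℤ) ^ β ∣ u ^ 2 + 1) :
    (p : ℤ) ^ β ∣ (u * y + x) * (u * y - x) ∧
    ((p : ℤ) ^ β ∣ (u * y + x) ↔ ¬ (p : ℤ) ^ β ∣ (u * y - x)) := by
  have hp' : Prime (p : ℤ) := Nat.prime_iff_prime_int.mp hp
  obtain ⟨c, hc⟩ := hu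
  have hprod : (p : ℤ) ^ β ∣ (u * y + x) * (u * y - x) := by
    refine ⟨c * y ^ 2 - 1, ?_⟩
    have : (u * y + x) * (u * y - x) = (u ^ 2 + 1) * y ^ 2 - (x ^ 2 + y ^ 2) := by ring
    rw [this, hc, ← hs]; ring
  have hp2 : ¬ (p : ℤ) ∣ 2 := by
    intro h
    have h2 : p ∣ 2 := Int.ofNat_dvd.mp (by exact_mod_cast h)
    have := Nat.le_of_dvd (by norm_num) h2
    interval_cases p <;> omega
  have hnotboth : ¬ ((p : ℤ) ∣ (u * y + x) ∧ (p : ℤ) ∣ (u * y - x)) := by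
    rintro ⟨hA, hB⟩
    have h2x : (p : ℤ) ∣ 2 * x := by
      have := dvd_sub hA hB
      have e : (u * y + x) - (u * y - x) = 2 * x := by ring
      rwa [e] at this
    rcases hp'.dvd_mul.mp h2x with h | h
    · exact hp2 h
    · exact hpx h
  have hpdvd : (p : ℤ) ∣ (u * y + x) * (u * y - x) :=
    dvd_trans (dvd_pow_self _ hβ.ne') hprod
  refine ⟨hprod, ?_⟩
  constructor
  · intro hA hB
    exact hnotboth ⟨dvd_trans (dvd_pow_self _ hβ.ne') hA,
      dvd_trans (dvd_pow_self _ hβ.ne') hB⟩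
  · intro hB
    rcases hp'.dvd_mul.mp hpdvd with hA | hB'
    · -- p ∣ A, so p ∤ B, so coprime, so p^β ∣ A
      have hnB : ¬ (p : ℤ) ∣ (u * y - x) := fun h => hnotboth ⟨hA, h⟩
      have hco : IsCoprime ((p : ℤ) ^ β) (u * y - x) :=
        ((hp'.coprime_iff_not_dvd.mpr hnB)).pow_left
      exact hco.dvd_of_dvd_mul_right hprod
    · have hnA : ¬ (p : ℤ) ∣ (u * y + x) := fun h => hnotboth ⟨h, hB'⟩
      have hco : IsCoprime ((p : ℤ) ^ β) (u * y + x) :=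
        ((hp'.coprime_iff_not_dvd.mpr hnA)).pow_left
      exact absurd (hco.dvd_of_dvd_mul_left hprod) hB
end

section
/- Let p be a prime with p ≡ 1 (mod 4), let β be a positive integer, and let u be an integer satisfying u² ≡ -1 (mod p^β). Then there exists a matrix S ∈ SL₂(ℤ) (viewed as a 2×2 rational matrix with integer entries and determinant 1) such that S · Sᵀ equals the matrix [[(1+u²)/p^β, u], [u, p^β]]. -/
open Matrix

lemma key : ∀ n : ℕ, ∀ a b c : ℤ, a * c - b * b = 1 → 0 < a → a ≤ (n : ℤ) →
    ∃ S : Matrix (Fin 2) (Fin 2) ℤ, S.det = 1 ∧ S * Sᵀ = !![a, b; b, c] := by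
  intro n
  induction n using Nat.strong_induction_on with
  | _ n IH =>
    intro a b c h ha han
    rcases eq_or_lt_of_le (by omega : (1:ℤ) ≤ a) with h1 | h2
    · -- a = 1
      refine ⟨!![1, 0; b, 1], by simp [Matrix.det_fin_two_of], ?_⟩
      have hc : c = 1 + b * b := by nlinarith
      ext i j
      fin_cases i <;> fin_cases j <;>
        simp [Matrix.mul_apply, Matrix.transpose_apply, Matrix.vecHead, Matrix.vecTail, Fin.sum_univ_two, hc, ← h1] <;> ring
    · -- a ≥ 2
      set k : ℤ := if 2 * (b % a) ≤ a then b / a else b / a + 1 with hk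
      set b' : ℤ := b - k * a with hb'
      set c' : ℤ := c - 2 * k * b + k ^ 2 * a with hc'
      have hmod : b % a = b - a * (b / a) := Int.emod_def b a
      have hr0 : 0 ≤ b % a := Int.emod_nonneg b (by omega)
      have hrlt : b % a < a := Int.emod_lt_of_pos b ha
      have hbsq : 4 * (b' * b') ≤ a * a := by
        rcases le_or_gt (2 * (b % a)) a with hle | hgt
        · have hbb : b' = b % a := by rw [hb', hk, if_pos hle, hmod]; ring
          nlinarith
        · have hbb : b' = b % a - a := by
            rw [hb', hk, if_neg (not_le.mpr hgt), hmod]; ring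
          nlinarith
      have heq : a * c' - b' * b' = 1 := by
        simp only [hb', hc']; linear_combination h
      have hc'pos : 0 < c' := by nlinarith
      have hc'lt : c' < a := by nlinarith
      obtain ⟨S', hdet', hS'⟩ := IH c'.toNat (by omega) c' (-b') a
        (by linear_combination heq) hc'pos (by omega)
      refine ⟨!![0, -1; 1, -k] * S', ?_, ?_⟩
      · rw [Matrix.det_mul, hdet', Matrix.det_fin_two_of]; ring
      · rw [Matrix.transpose_mul, mul_assoc, ← mul_assoc S' S'ᵀ, hS', ← mul_assoc]
        ext i j
        fin_cases i <;> fin_cases j <;>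
          simp [Matrix.mul_apply, Matrix.transpose_apply, Matrix.vecHead, Matrix.vecTail, Fin.sum_univ_two, hb', hc'] <;> ring

theorem stmt2 (p : ℕ) (hp : p.Prime) (h1 : p % 4 = 1) (β : ℕ) (hβ : 0 < β)
    (u : ℤ) (hu : (p : ℤ) ^ β ∣ u ^ 2 + 1) :
    ∃ S : Matrix (Fin 2) (Fin 2) ℤ, S.det = 1 ∧
      (S.map (Int.cast : ℤ → ℚ)) * (S.map (Int.cast : ℤ → ℚ))ᵀ =
        !![(1 + (u : ℚ) ^ 2) / (p : ℚ) ^ β, (u : ℚ); (u : ℚ), (p : ℚ) ^ β] := by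
  obtain ⟨m, hm⟩ := hu
  have hp0 : (0:ℤ) < (p:ℤ) ^ β := pow_pos (by exact_mod_cast hp.pos) β
  have hm0 : 0 < m := by nlinarith [sq_nonneg u]
  obtain ⟨S, hdet, hS⟩ := key m.toNat m u ((p:ℤ)^β)
    (by linear_combination -hm) hm0 (by omega)
  refine ⟨S, hdet, ?_⟩
  have hmap : (S.map (Int.cast : ℤ → ℚ))ᵀ = Sᵀ.map (Int.cast : ℤ → ℚ) := by
    ext i j; simp
  rw [hmap, show (Int.cast : ℤ → ℚ) = ⇑(Int.castRingHom ℚ) from rfl,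
    ← Matrix.map_mul, hS]
  have hppos : (0:ℚ) < (p:ℚ) := by exact_mod_cast hp.pos
  have hpQ : ((p:ℚ))^β ≠ 0 := by positivity
  have hmQ : (m:ℚ) * (p:ℚ)^β = 1 + (u:ℚ)^2 := by
    have h2 := congrArg (Int.cast : ℤ → ℚ) hm
    push_cast at h2
    linarith
  ext i j
  fin_cases i <;> fin_cases j <;>
    simp [Matrix.map_apply] <;> push_cast <;>
    first
      | (rw [eq_div_iff hpQ]; linarith)
      | ring
end

section
/- Let p ≡ 1 (mod 4) be prime and suppose p = x₁² + y₁² with x₁ odd, y₁ even, and x, y positive integers with p^n = x² + y², p ∤ x, p ∤ y for some n ≥ 1. Then p cannot divide both x₁·x + y₁·y and x₁·x − y₁·y; consequently at least one of |x₁x + y₁y|, |x₁x − y₁y| is a positive integer not divisible by p, and p^{n+1} = (x₁x + y₁y)² + (x·y₁ − x₁·y)² = (x₁x − y₁y)² + (x·y₁ + x₁·y)². -/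
/-!
Multiplying `x + iy` by `x₁ ± iy₁` gives the two representations of `p^(n+1)`. If `p` divided both
`x₁x + y₁y` and `x₁x - y₁y`, it would divide their sum `2x₁x`; but `p` is odd (as `x₁` is odd and
`y₁` even), `p ∤ x`, and `p ∤ x₁` because `0 < x₁² ≤ p < p²`.
-/

lemma not_dvd_of_eq_sq_add_sq {q a b : ℤ} (hq : 1 < q) (h : q = a ^ 2 + b ^ 2) (ha : a ≠ 0) :
    ¬ q ∣ a := by
  intro hdvd
  have hle : q ≤ |a| := Int.le_of_dvd (abs_pos.mpr ha) ((dvd_abs q a).mpr hdvd)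
  nlinarith [sq_abs a, sq_nonneg b, mul_le_mul hle hle (by omega) (abs_nonneg a)]

lemma not_dvd_add_and_dvd_sub {R : Type*} [CommRing R] {q a b : R} (hq : Prime q)
    (h2 : ¬ q ∣ 2) (ha : ¬ q ∣ a) : ¬ (q ∣ a + b ∧ q ∣ a - b) := by
  rintro ⟨hadd, hsub⟩
  have h2a : q ∣ 2 * a := by
    simpa only [add_add_sub_cancel, two_mul] using dvd_add hadd hsub
  exact (hq.dvd_or_dvd h2a).elim h2 ha

lemma abs_pos_and_not_dvd_abs_of_not_dvd {q c : ℤ} (hc : ¬ q ∣ c) : 0 < |c| ∧ ¬ q ∣ |c| :=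
  ⟨abs_pos.mpr fun h0 => hc (h0 ▸ dvd_zero q), (dvd_abs q c).not.mpr hc⟩

lemma abs_pos_and_not_dvd_abs_or {q a b : ℤ} (h : ¬ (q ∣ a ∧ q ∣ b)) :
    (0 < |a| ∧ ¬ q ∣ |a|) ∨ (0 < |b| ∧ ¬ q ∣ |b|) := by
  by_cases ha : q ∣ a
  · exact .inr (abs_pos_and_not_dvd_abs_of_not_dvd fun hb => h ⟨ha, hb⟩)
  · exact .inl (abs_pos_and_not_dvd_abs_of_not_dvd ha)

theorem stmt17_general (p : ℕ) (hp : p.Prime) (x₁ y₁ : ℤ)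
    (hdec : (p : ℤ) = x₁ ^ 2 + y₁ ^ 2) (hx₁ : Odd x₁) (hy₁ : Even y₁)
    (x y : ℤ) (n : ℕ)
    (hs : (p : ℤ) ^ n = x ^ 2 + y ^ 2) (hpx : ¬ (p : ℤ) ∣ x) :
    ¬ ((p : ℤ) ∣ x₁ * x + y₁ * y ∧ (p : ℤ) ∣ x₁ * x - y₁ * y) ∧
    ((0 < |x₁ * x + y₁ * y| ∧ ¬ (p : ℤ) ∣ |x₁ * x + y₁ * y|) ∨
     (0 < |x₁ * x - y₁ * y| ∧ ¬ (p : ℤ) ∣ |x₁ * x - y₁ * y|)) ∧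
    (p : ℤ) ^ (n + 1) = (x₁ * x + y₁ * y) ^ 2 + (x * y₁ - x₁ * y) ^ 2 ∧
    (p : ℤ) ^ (n + 1) = (x₁ * x - y₁ * y) ^ 2 + (x * y₁ + x₁ * y) ^ 2 := by
  have hpZ : Prime (p : ℤ) := Nat.prime_iff_prime_int.mp hp
  have hp_odd : Odd p := by
    have : Odd (p : ℤ) := hdec ▸ hx₁.pow.add_even (hy₁.pow_of_ne_zero two_ne_zero)
    exact_mod_cast this
  have hp2 : ¬ (p : ℤ) ∣ 2 := fun h => by
    have hp_eq : p = 2 := (Nat.prime_dvd_prime_iff_eq hp Nat.prime_two).mp (by exact_mod_cast h)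
    exact Nat.not_even_iff_odd.mpr hp_odd (hp_eq ▸ even_two)
  have hpx₁ : ¬ (p : ℤ) ∣ x₁ :=
    not_dvd_of_eq_sq_add_sq (by exact_mod_cast hp.one_lt) hdec (by rintro rfl; simp at hx₁)
  have hpx₁x : ¬ (p : ℤ) ∣ x₁ * x := fun h => (hpZ.dvd_or_dvd h).elim hpx₁ hpx
  have hmain := not_dvd_add_and_dvd_sub (b := y₁ * y) hpZ hp2 hpx₁x
  have hpow : (p : ℤ) ^ (n + 1) = (x₁ ^ 2 + y₁ ^ 2) * (x ^ 2 + y ^ 2) := by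
    rw [pow_succ, hs, hdec, mul_comm]
  exact ⟨hmain, abs_pos_and_not_dvd_abs_or hmain, by rw [hpow]; ring, by rw [hpow]; ring⟩

theorem stmt17 (p : ℕ) (hp : p.Prime) (h1 : p % 4 = 1) (x₁ y₁ : ℤ)
    (hdec : (p : ℤ) = x₁ ^ 2 + y₁ ^ 2) (hx₁ : Odd x₁) (hy₁ : Even y₁)
    (x y : ℤ) (hx : 0 < x) (hy : 0 < y) (n : ℕ) (hn : 1 ≤ n)
    (hs : (p : ℤ) ^ n = x ^ 2 + y ^ 2) (hpx : ¬ (p : ℤ) ∣ x) (hpy : ¬ (p : ℤ) ∣ y) :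
    ¬ ((p : ℤ) ∣ x₁ * x + y₁ * y ∧ (p : ℤ) ∣ x₁ * x - y₁ * y) ∧
    ((0 < |x₁ * x + y₁ * y| ∧ ¬ (p : ℤ) ∣ |x₁ * x + y₁ * y|) ∨
     (0 < |x₁ * x - y₁ * y| ∧ ¬ (p : ℤ) ∣ |x₁ * x - y₁ * y|)) ∧
    (p : ℤ) ^ (n + 1) = (x₁ * x + y₁ * y) ^ 2 + (x * y₁ - x₁ * y) ^ 2 ∧
    (p : ℤ) ^ (n + 1) = (x₁ * x - y₁ * y) ^ 2 + (x * y₁ + x₁ * y) ^ 2 :=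
  stmt17_general p hp x₁ y₁ hdec hx₁ hy₁ x y n hs hpx
end
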